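/- arXiv:1410.4574 — 2 statements merged into one kernel-verified Lean document; each statement's English description precedes it below -/
import Mathlib

section
/- Theorem 4 (cevians through two points): let P₁ and P₂ be two points of the interior of triangle ABC, and suppose that for each i ∈ {1,2} the cevians AAᵢ, BBᵢ, CCᵢ all pass through Pᵢ (i.e. Aᵢ lies on line BC and on line APᵢ, Bᵢ lies on line CA and on line BPᵢ, Cᵢ lies on line AB and on line CPᵢ). Then the six cevian feet A₁, A₂, B₁, B₂, C₁, C₂ are conconic. -/
/-!
Work in barycentric coordinates `x : y : z` with respect to `ABC`, and let `Pᵢ = uᵢ : vᵢ : wᵢ`.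
The cevian feet of `Pᵢ` are `0 : vᵢ : wᵢ`, `uᵢ : 0 : wᵢ` and `uᵢ : vᵢ : 0`, and all six lie on
`x² / (u₁ u₂) + y² / (v₁ v₂) + z² / (w₁ w₂)
  - (1 / (v₁ w₂) + 1 / (v₂ w₁)) y z - (1 / (w₁ u₂) + 1 / (w₂ u₁)) z x - (1 / (u₁ v₂) + 1 / (u₂ v₁)) x y = 0`,
which is symmetric in `P₁, P₂`: at `0 : v₁ : w₁` the left side is `v₁ / v₂ + w₁ / w₂ - (w₁ / w₂ + v₁ / v₂)`.
Barycentric coordinates are affine functions of the Cartesian ones, so this is a quadratic equation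
in the Cartesian coordinates, and it is not trivial because it does not hold at `A`.
-/

open EuclideanGeometry

abbrev Pt := EuclideanSpace ℝ (Fin 2)

/-- Six (or any set of) points lie on a common conic: a nonzero quadratic equation
vanishes at each of them. -/
def Conconic (s : Set Pt) : Prop :=
  ∃ a b c d e f : ℝ, (a, b, c, d, e, f) ≠ (0, 0, 0, 0, 0, 0) ∧
    ∀ P ∈ s, a * (P 0) ^ 2 + b * (P 0) * (P 1) + c * (P 1) ^ 2 + d * (P 0) + e * (P 1) + f = 0

/-- `P` lies in the interior of the triangle `ABC`: it is a strictly positive convex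
combination of the vertices. -/
def InTriangleInterior (A B C P : Pt) : Prop :=
  ∃ a b c : ℝ, 0 < a ∧ 0 < b ∧ 0 < c ∧ a + b + c = 1 ∧ P = a • A + b • B + c • C

namespace AffineBasis

variable {ι k V P : Type*} [CommRing k] [AddCommGroup V] [Module k V] [AddTorsor V P]
  (b : AffineBasis ι k P) {i j l : ι} {Q X : P}

theorem coord_eq_zero_of_mem_line (hj : j ≠ i) (hl : l ≠ i) (hX : X ∈ line[k, b j, b l]) :
    b.coord i X = 0 := by
  obtain ⟨r, rfl⟩ := mem_affineSpan_pair_iff_exists_lineMap_eq.mp hX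
  rw [AffineMap.apply_lineMap, b.coord_apply_ne hj.symm, b.coord_apply_ne hl.symm,
    AffineMap.lineMap_same_apply]

theorem exists_coord_eq_mul_of_mem_line (hX : X ∈ line[k, b i, Q]) :
    ∃ t : k, ∀ m ≠ i, b.coord m X = t * b.coord m Q := by
  obtain ⟨t, rfl⟩ := mem_affineSpan_pair_iff_exists_lineMap_eq.mp hX
  refine ⟨t, fun m hm => ?_⟩
  rw [AffineMap.apply_lineMap, b.coord_apply_ne hm, AffineMap.lineMap_apply_ring']
  ring

end AffineBasis

theorem AffineMap.exists_apply_eq_mul_add_mul_add (f : Pt →ᵃ[ℝ] ℝ) :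
    ∃ p q r : ℝ, ∀ X : Pt, f X = p * X 0 + q * X 1 + r := by
  refine ⟨f.linear (EuclideanSpace.single 0 1), f.linear (EuclideanSpace.single 1 1), f 0,
    fun X => ?_⟩
  have hX : X = X 0 • EuclideanSpace.single 0 1 + X 1 • EuclideanSpace.single 1 1 := by
    ext i; fin_cases i <;> simp
  conv_lhs => rw [f.decomp, hX]
  simp [mul_comm]

def IsQuadraticFunction (F : Pt → ℝ) : Prop :=
  ∃ a b c d e f : ℝ, ∀ X : Pt,
    F X = a * X 0 ^ 2 + b * X 0 * X 1 + c * X 1 ^ 2 + d * X 0 + e * X 1 + f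

namespace IsQuadraticFunction

variable {F G : Pt → ℝ}

theorem add (hF : IsQuadraticFunction F) (hG : IsQuadraticFunction G) :
    IsQuadraticFunction (fun X => F X + G X) := by
  obtain ⟨a, b, c, d, e, f, hF⟩ := hF
  obtain ⟨a', b', c', d', e', f', hG⟩ := hG
  exact ⟨a + a', b + b', c + c', d + d', e + e', f + f', fun X => by simp only [hF, hG]; ring⟩

theorem sub (hF : IsQuadraticFunction F) (hG : IsQuadraticFunction G) :
    IsQuadraticFunction (fun X => F X - G X) := by
  obtain ⟨a, b, c, d, e, f, hF⟩ := hF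
  obtain ⟨a', b', c', d', e', f', hG⟩ := hG
  exact ⟨a - a', b - b', c - c', d - d', e - e', f - f', fun X => by simp only [hF, hG]; ring⟩

theorem const_mul (r : ℝ) (hF : IsQuadraticFunction F) :
    IsQuadraticFunction (fun X => r * F X) := by
  obtain ⟨a, b, c, d, e, f, hF⟩ := hF
  exact ⟨r * a, r * b, r * c, r * d, r * e, r * f, fun X => by simp only [hF]; ring⟩

theorem conconic {s : Set Pt} (hF : IsQuadraticFunction F) {X : Pt} (hX : F X ≠ 0)
    (hs : ∀ P ∈ s, F P = 0) : Conconic s := by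
  obtain ⟨a, b, c, d, e, f, hF⟩ := hF
  refine ⟨a, b, c, d, e, f, fun h0 => hX ?_, fun P hP => (hF P).symm.trans (hs P hP)⟩
  simp only [Prod.mk.injEq] at h0
  obtain ⟨rfl, rfl, rfl, rfl, rfl, rfl⟩ := h0
  simp [hF]

end IsQuadraticFunction

theorem isQuadraticFunction_mul (f g : Pt →ᵃ[ℝ] ℝ) :
    IsQuadraticFunction (fun X => f X * g X) := by
  obtain ⟨p, q, r, hf⟩ := f.exists_apply_eq_mul_add_mul_add
  obtain ⟨p', q', r', hg⟩ := g.exists_apply_eq_mul_add_mul_add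
  exact ⟨p * p', p * q' + q * p', q * q', p * r' + r * p', q * r' + r * q', r * r',
    fun X => by simp only [hf, hg]; ring⟩

def triangleBasis {A B C : Pt} (h : AffineIndependent ℝ ![A, B, C]) :
    AffineBasis (Fin 3) ℝ Pt :=
  ⟨![A, B, C], h, h.affineSpan_eq_top_iff_card_eq_finrank_add_one.mpr (by simp)⟩

theorem coe_triangleBasis {A B C : Pt} (h : AffineIndependent ℝ ![A, B, C]) :
    ⇑(triangleBasis h) = ![A, B, C] :=
  rfl

theorem InTriangleInterior.coord_pos {A B C P : Pt} (h : AffineIndependent ℝ ![A, B, C])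
    (hP : InTriangleInterior A B C P) (i : Fin 3) : 0 < (triangleBasis h).coord i P := by
  obtain ⟨a, b, c, ha, hb, hc, hsum, rfl⟩ := hP
  have hw : ∑ j, ![a, b, c] j = 1 := by simp [Fin.sum_univ_three, hsum]
  have hcomb : a • A + b • B + c • C =
      Finset.univ.affineCombination ℝ (triangleBasis h) ![a, b, c] := by
    rw [Finset.affineCombination_eq_linear_combination _ _ _ hw]
    simp [Fin.sum_univ_three, coe_triangleBasis]
  rw [hcomb, AffineBasis.coord_apply_combination_of_mem _ (Finset.mem_univ i) hw]
  fin_cases i <;> simpa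

/-- The conic of the header, multiplied by `u₁ u₂ v₁ v₂ w₁ w₂`. -/
def cevianConic (u₁ v₁ w₁ u₂ v₂ w₂ x y z : ℝ) : ℝ :=
  v₁ * v₂ * w₁ * w₂ * x ^ 2 + w₁ * w₂ * u₁ * u₂ * y ^ 2 + u₁ * u₂ * v₁ * v₂ * z ^ 2
    - u₁ * u₂ * (v₁ * w₂ + v₂ * w₁) * (y * z) - v₁ * v₂ * (w₁ * u₂ + w₂ * u₁) * (z * x)
    - w₁ * w₂ * (u₁ * v₂ + u₂ * v₁) * (x * y)

theorem cevianConic_comm (u₁ v₁ w₁ u₂ v₂ w₂ x y z : ℝ) :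
    cevianConic u₁ v₁ w₁ u₂ v₂ w₂ x y z = cevianConic u₂ v₂ w₂ u₁ v₁ w₁ x y z := by
  unfold cevianConic
  ring

section cevianConicAt

variable (b : AffineBasis (Fin 3) ℝ Pt) (P Q : Pt)

noncomputable def cevianConicAt (X : Pt) : ℝ :=
  cevianConic (b.coord 0 P) (b.coord 1 P) (b.coord 2 P) (b.coord 0 Q) (b.coord 1 Q)
    (b.coord 2 Q) (b.coord 0 X) (b.coord 1 X) (b.coord 2 X)

theorem isQuadraticFunction_cevianConicAt : IsQuadraticFunction (cevianConicAt b P Q) := by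
  unfold cevianConicAt cevianConic
  simp only [sq]
  repeat' first
    | exact (isQuadraticFunction_mul _ _).const_mul _
    | refine .sub ?_ ?_
    | refine .add ?_ ?_

theorem cevianConicAt_comm : cevianConicAt b P Q = cevianConicAt b Q P := by
  ext X
  exact cevianConic_comm ..

theorem cevianConicAt_vertex_zero :
    cevianConicAt b P Q (b 0) = b.coord 1 P * b.coord 1 Q * b.coord 2 P * b.coord 2 Q := by
  simp [cevianConicAt, cevianConic, b.coord_apply]

variable {P} {X : Pt}

theorem cevianConicAt_eq_zero_of_foot₀ (hX : X ∈ line[ℝ, b 1, b 2])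
    (hXP : X ∈ line[ℝ, b 0, P]) : cevianConicAt b P Q X = 0 := by
  obtain ⟨t, ht⟩ := b.exists_coord_eq_mul_of_mem_line hXP
  rw [cevianConicAt, b.coord_eq_zero_of_mem_line (by decide) (by decide) hX,
    ht 1 (by decide), ht 2 (by decide), cevianConic]
  ring

theorem cevianConicAt_eq_zero_of_foot₁ (hX : X ∈ line[ℝ, b 2, b 0])
    (hXP : X ∈ line[ℝ, b 1, P]) : cevianConicAt b P Q X = 0 := by
  obtain ⟨t, ht⟩ := b.exists_coord_eq_mul_of_mem_line hXP
  rw [cevianConicAt, b.coord_eq_zero_of_mem_line (i := 1) (by decide) (by decide) hX,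
    ht 0 (by decide), ht 2 (by decide), cevianConic]
  ring

theorem cevianConicAt_eq_zero_of_foot₂ (hX : X ∈ line[ℝ, b 0, b 1])
    (hXP : X ∈ line[ℝ, b 2, P]) : cevianConicAt b P Q X = 0 := by
  obtain ⟨t, ht⟩ := b.exists_coord_eq_mul_of_mem_line hXP
  rw [cevianConicAt, b.coord_eq_zero_of_mem_line (i := 2) (by decide) (by decide) hX,
    ht 0 (by decide), ht 1 (by decide), cevianConic]
  ring

end cevianConicAt

theorem concurrent_cevian_feet_conconic_general
    (A B C A₁ A₂ B₁ B₂ C₁ C₂ P₁ P₂ : Pt)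
    (hABC : AffineIndependent ℝ ![A, B, C])
    (hP₁ : InTriangleInterior A B C P₁) (hP₂ : InTriangleInterior A B C P₂)
    (hA₁ : A₁ ∈ line[ℝ, B, C]) (hA₂ : A₂ ∈ line[ℝ, B, C])
    (hB₁ : B₁ ∈ line[ℝ, C, A]) (hB₂ : B₂ ∈ line[ℝ, C, A])
    (hC₁ : C₁ ∈ line[ℝ, A, B]) (hC₂ : C₂ ∈ line[ℝ, A, B])
    (hA₁P : A₁ ∈ line[ℝ, A, P₁]) (hB₁P : B₁ ∈ line[ℝ, B, P₁]) (hC₁P : C₁ ∈ line[ℝ, C, P₁])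
    (hA₂P : A₂ ∈ line[ℝ, A, P₂]) (hB₂P : B₂ ∈ line[ℝ, B, P₂]) (hC₂P : C₂ ∈ line[ℝ, C, P₂]) :
    Conconic {A₁, A₂, B₁, B₂, C₁, C₂} := by
  set b := triangleBasis hABC
  refine (isQuadraticFunction_cevianConicAt b P₁ P₂).conconic (X := A) ?_ ?_
  · have h₁ := hP₁.coord_pos hABC
    have h₂ := hP₂.coord_pos hABC
    exact (cevianConicAt_vertex_zero b P₁ P₂).trans_ne
      (mul_pos (mul_pos (mul_pos (h₁ 1) (h₂ 1)) (h₁ 2)) (h₂ 2)).ne'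
  · rintro X (rfl | rfl | rfl | rfl | rfl | rfl)
    · exact cevianConicAt_eq_zero_of_foot₀ b _ hA₁ hA₁P
    · rw [cevianConicAt_comm]; exact cevianConicAt_eq_zero_of_foot₀ b _ hA₂ hA₂P
    · exact cevianConicAt_eq_zero_of_foot₁ b _ hB₁ hB₁P
    · rw [cevianConicAt_comm]; exact cevianConicAt_eq_zero_of_foot₁ b _ hB₂ hB₂P
    · exact cevianConicAt_eq_zero_of_foot₂ b _ hC₁ hC₁P
    · rw [cevianConicAt_comm]; exact cevianConicAt_eq_zero_of_foot₂ b _ hC₂ hC₂P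

/-- Theorem 4: the feet of two triples of concurrent cevians are conconic. -/
theorem concurrent_cevian_feet_conconic
    (A B C A₁ A₂ B₁ B₂ C₁ C₂ P₁ P₂ : Pt)
    (hABC : AffineIndependent ℝ ![A, B, C])
    (hP₁ : InTriangleInterior A B C P₁) (hP₂ : InTriangleInterior A B C P₂)
    (hA₁ : A₁ ∈ line[ℝ, B, C]) (hA₂ : A₂ ∈ line[ℝ, B, C])
    (hB₁ : B₁ ∈ line[ℝ, C, A]) (hB₂ : B₂ ∈ line[ℝ, C, A])
    (hC₁ : C₁ ∈ line[ℝ, A, B]) (hC₂ : C₂ ∈ line[ℝ, A, B])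
    (hne : ∀ P ∈ ({A₁, A₂, B₁, B₂, C₁, C₂} : Set Pt), P ≠ A ∧ P ≠ B ∧ P ≠ C)
    (hA₁P : A₁ ∈ line[ℝ, A, P₁]) (hB₁P : B₁ ∈ line[ℝ, B, P₁]) (hC₁P : C₁ ∈ line[ℝ, C, P₁])
    (hA₂P : A₂ ∈ line[ℝ, A, P₂]) (hB₂P : B₂ ∈ line[ℝ, B, P₂]) (hC₂P : C₂ ∈ line[ℝ, C, P₂]) :
    Conconic {A₁, A₂, B₁, B₂, C₁, C₂} :=
  concurrent_cevian_feet_conconic_general A B C A₁ A₂ B₁ B₂ C₁ C₂ P₁ P₂ hABC hP₁ hP₂ hA₁ hA₂ hB₁ hB₂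
    hC₁ hC₂ hA₁P hB₁P hC₁P hA₂P hB₂P hC₂P
end

section
/- Morley conconic corollary (via condition (1) of Theorem 1): in any triangle ABC, the six points at which the angle trisectors meet the opposite sides — A₁, A₂ on BC, B₁, B₂ on CA, C₁, C₂ on AB — are conconic. -/
open EuclideanGeometry

/-!
If `A₁ = B + t₁ (C - B)` and `A₂ = B + t₂ (C - B)` are the feet of two isogonal cevians from `A`,
then `AB² (1 - t₁)(1 - t₂) = AC² t₁ t₂` (Steiner): both sides come from computing
`sin θ cos θ` for the common angle `θ` in the triangles `ABA₁` and `ACA₂`. Multiplying the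
three such relations of a triangle, the side lengths cancel and the parameters of the six feet
satisfy Carnot's condition `∏ (1 - tᵢ)(1 - uᵢ)(1 - vᵢ) = ∏ tᵢ uᵢ vᵢ`, which is also sufficient
for six points on the sides to lie on a conic.
-/

namespace InnerProductGeometry

variable {V : Type*} [NormedAddCommGroup V] [InnerProductSpace ℝ V]

theorem sin_angle_mul_norm_mul_norm_smul_add_smul (x y : V) (a : ℝ) {t : ℝ} (ht : 0 ≤ t) :
    Real.sin (angle x (a • x + t • y)) * (‖x‖ * ‖a • x + t • y‖) =
      t * (Real.sin (angle x y) * (‖x‖ * ‖y‖)) := by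
  rw [sin_angle_mul_norm_mul_norm, sin_angle_mul_norm_mul_norm]
  conv_rhs => rw [← Real.sqrt_sq ht, ← Real.sqrt_mul (sq_nonneg t)]
  congr 1
  simp only [inner_add_left, inner_add_right, real_inner_smul_left, real_inner_smul_right,
    real_inner_comm x y]
  ring

theorem norm_sq_mul_eq_norm_sq_mul_of_angle_eq {u w : V}
    (hS : Real.sin (angle u w) * (‖u‖ * ‖w‖) ≠ 0) {t s : ℝ} (ht : 0 ≤ t) (hs : s ≤ 1)
    (hang : angle u ((1 - t) • u + t • w) = angle w (s • w + (1 - s) • u)) :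
    ‖u‖ ^ 2 * ((1 - t) * (1 - s)) = ‖w‖ ^ 2 * (t * s) := by
  set x := (1 - t) • u + t • w
  set y := s • w + (1 - s) • u
  set θ := angle u x
  have hsin_x : Real.sin θ * (‖u‖ * ‖x‖) = t * (Real.sin (angle u w) * (‖u‖ * ‖w‖)) :=
    sin_angle_mul_norm_mul_norm_smul_add_smul u w (1 - t) ht
  have hsin_y : Real.sin θ * (‖w‖ * ‖y‖) = (1 - s) * (Real.sin (angle u w) * (‖u‖ * ‖w‖)) := by
    rw [hang, sin_angle_mul_norm_mul_norm_smul_add_smul w u s (sub_nonneg.2 hs), angle_comm]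
    ring
  have hcos_x : Real.cos θ * (‖u‖ * ‖x‖) = inner ℝ u x := cos_angle_mul_norm_mul_norm u x
  have hcos_y : Real.cos θ * (‖w‖ * ‖y‖) = inner ℝ w y := by
    rw [hang]; exact cos_angle_mul_norm_mul_norm w y
  have key : t * inner ℝ w y = (1 - s) * inner ℝ u x := by
    apply mul_left_cancel₀ hS
    rw [← hcos_x, ← hcos_y]
    linear_combination
      (-(Real.cos θ * (‖w‖ * ‖y‖))) * hsin_x + (Real.cos θ * (‖u‖ * ‖x‖)) * hsin_y
  simp only [x, y, inner_add_right, real_inner_smul_right, real_inner_self_eq_norm_sq,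
    real_inner_comm u w] at key
  linear_combination -key

end InnerProductGeometry

namespace EuclideanGeometry

open AffineMap

variable {V P : Type*} [NormedAddCommGroup V] [InnerProductSpace ℝ V] [MetricSpace P]
  [NormedAddTorsor V P]

theorem dist_sq_mul_eq_dist_sq_mul_of_isogonal {o p q : P} (h : ¬Collinear ℝ {p, o, q})
    {t s : ℝ} (ht : 0 ≤ t) (hs : s ≤ 1)
    (hang : ∠ p o (lineMap p q t) = ∠ q o (lineMap p q s)) :
    dist o p ^ 2 * ((1 - t) * (1 - s)) = dist o q ^ 2 * (t * s) := by
  rw [dist_comm, dist_eq_norm_vsub V, dist_comm, dist_eq_norm_vsub V]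
  refine InnerProductGeometry.norm_sq_mul_eq_norm_sq_mul_of_angle_eq ?_ ht hs ?_
  · have hp : p -ᵥ o ≠ 0 := vsub_ne_zero.2 (ne₁₂_of_not_collinear h)
    have hq : q -ᵥ o ≠ 0 := vsub_ne_zero.2 (ne₂₃_of_not_collinear h).symm
    have hsin := sin_ne_zero_of_not_collinear h
    rw [angle] at hsin
    positivity
  · rwa [angle, angle, lineMap_vsub, lineMap_vsub, lineMap_apply_module, lineMap_apply_module,
      add_comm ((1 - s) • (p -ᵥ o))] at hang

end EuclideanGeometry

theorem AffineBasis.coord_lineMap {ι k V P : Type*} [Ring k] [AddCommGroup V] [Module k V]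
    [AddTorsor V P] [DecidableEq ι] (b : AffineBasis ι k P) (i j l : ι) (r : k) :
    b.coord i (AffineMap.lineMap (b j) (b l) r) =
      (1 - r) * (if i = j then 1 else 0) + r * (if i = l then 1 else 0) := by
  rw [AffineMap.apply_lineMap, b.coord_apply, b.coord_apply, AffineMap.lineMap_apply_module,
    smul_eq_mul, smul_eq_mul]

def quadraticFunctions : Submodule ℝ (Pt → ℝ) where
  carrier := {q | ∃ a b c d e f : ℝ, ∀ P : Pt,
    q P = a * (P 0) ^ 2 + b * (P 0) * (P 1) + c * (P 1) ^ 2 + d * (P 0) + e * (P 1) + f}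
  add_mem' := by
    rintro q q' ⟨a, b, c, d, e, f, hq⟩ ⟨a', b', c', d', e', f', hq'⟩
    exact ⟨a + a', b + b', c + c', d + d', e + e', f + f', fun P => by
      simp only [Pi.add_apply, hq, hq']; ring⟩
  zero_mem' := ⟨0, 0, 0, 0, 0, 0, fun P => by simp⟩
  smul_mem' := by
    rintro r q ⟨a, b, c, d, e, f, hq⟩
    exact ⟨r * a, r * b, r * c, r * d, r * e, r * f, fun P => by
      simp only [Pi.smul_apply, smul_eq_mul, hq]; ring⟩

theorem AffineMap.exists_apply_eq_coords (f : Pt →ᵃ[ℝ] ℝ) :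
    ∃ α β γ : ℝ, ∀ P : Pt, f P = α * P 0 + β * P 1 + γ := by
  refine ⟨f.linear (EuclideanSpace.single 0 1), f.linear (EuclideanSpace.single 1 1), f 0,
    fun P => ?_⟩
  have hP : P = (P 0 • EuclideanSpace.single 0 1 + P 1 • EuclideanSpace.single 1 1 : Pt) +ᵥ
      (0 : Pt) := by
    ext i; fin_cases i <;> simp
  conv_lhs => rw [hP, f.map_vadd]
  simp [mul_comm]

theorem mul_mem_quadraticFunctions (f g : Pt →ᵃ[ℝ] ℝ) : ⇑f * ⇑g ∈ quadraticFunctions := by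
  obtain ⟨α, β, γ, hf⟩ := f.exists_apply_eq_coords
  obtain ⟨α', β', γ', hg⟩ := g.exists_apply_eq_coords
  exact ⟨α * α', α * β' + β * α', β * β', α * γ' + γ * α', β * γ' + γ * β', γ * γ', fun P => by
    rw [Pi.mul_apply, hf, hg]; ring⟩

theorem Conconic.of_mem_quadraticFunctions {s : Set Pt} {q : Pt → ℝ}
    (hq : q ∈ quadraticFunctions) (hq₀ : q ≠ 0) (hs : ∀ P ∈ s, q P = 0) : Conconic s := by
  obtain ⟨a, b, c, d, e, f, hq⟩ := hq
  refine ⟨a, b, c, d, e, f, fun h => hq₀ ?_, fun P hP => (hq P).symm.trans (hs P hP)⟩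
  simp only [Prod.mk.injEq] at h
  obtain ⟨rfl, rfl, rfl, rfl, rfl, rfl⟩ := h
  ext P; simp [hq]

open AffineMap in
theorem conconic_of_carnot {A B C : Pt} (h : AffineIndependent ℝ ![A, B, C])
    {t₁ t₂ u₁ u₂ v₁ v₂ : ℝ} (ht₁ : t₁ ≠ 0) (ht₂ : t₂ ≠ 0) (hu₁ : u₁ ≠ 1) (hu₂ : u₂ ≠ 1)
    (hv₁ : v₁ ≠ 0) (hv₂ : v₂ ≠ 0)
    (hcarnot : (1 - t₁) * (1 - t₂) * ((1 - u₁) * (1 - u₂)) * ((1 - v₁) * (1 - v₂)) =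
      t₁ * t₂ * (u₁ * u₂) * (v₁ * v₂)) :
    Conconic {lineMap B C t₁, lineMap B C t₂, lineMap C A u₁, lineMap C A u₂,
      lineMap A B v₁, lineMap A B v₂} := by
  let b : AffineBasis (Fin 3) ℝ Pt := ⟨![A, B, C], h, by
    rw [h.affineSpan_eq_top_iff_card_eq_finrank_add_one]; simp⟩
  set x := b.coord 0
  set y := b.coord 1
  set z := b.coord 2
  -- On the side `x = 0`, `Q` is a multiple of the first product, which vanishes at the two feet
  -- on `BC`; cyclically on the other sides, where for `y = 0` Carnot's condition is needed.
  -- At `A`, `Q = t₁ t₂ v₁ v₂ (1 - u₁)(1 - u₂)`.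
  set Q : Pt → ℝ :=
    ((1 - v₁) * (1 - v₂) * ((1 - u₁) * (1 - u₂))) •
        (⇑(t₁ • y - (1 - t₁) • z) * ⇑(t₂ • y - (1 - t₂) • z)) +
      (t₁ * t₂ * (v₁ * v₂)) • (⇑(u₁ • z - (1 - u₁) • x) * ⇑(u₂ • z - (1 - u₂) • x)) +
      (t₁ * t₂ * ((1 - u₁) * (1 - u₂))) • (⇑(v₁ • x - (1 - v₁) • y) * ⇑(v₂ • x - (1 - v₂) • y)) -
      (t₁ * t₂ * (v₁ * v₂) * ((1 - u₁) * (1 - u₂))) • (⇑x * ⇑x) -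
      (t₁ * t₂ * ((1 - v₁) * (1 - v₂)) * ((1 - u₁) * (1 - u₂))) • (⇑y * ⇑y) -
      (t₁ * t₂ * (u₁ * u₂) * (v₁ * v₂)) • (⇑z * ⇑z) with hQ
  change Conconic {lineMap (b 1) (b 2) t₁, lineMap (b 1) (b 2) t₂, lineMap (b 2) (b 0) u₁,
    lineMap (b 2) (b 0) u₂, lineMap (b 0) (b 1) v₁, lineMap (b 0) (b 1) v₂}
  apply Conconic.of_mem_quadraticFunctions (q := Q)
  · apply_rules [Submodule.sub_mem, Submodule.add_mem, Submodule.smul_mem,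
      mul_mem_quadraticFunctions]
  · intro hQ₀
    have hQA := congrFun hQ₀ (b 0)
    simp only [hQ, x, y, z, b.coord_apply, coe_sub, coe_smul, Pi.sub_apply, Pi.add_apply,
      Pi.smul_apply, Pi.mul_apply, Pi.zero_apply, smul_eq_mul, Fin.reduceEq, ↓reduceIte] at hQA
    have : t₁ * t₂ * (v₁ * v₂) * ((1 - u₁) * (1 - u₂)) ≠ 0 := by
      simp [ht₁, ht₂, hv₁, hv₂, sub_eq_zero, hu₁.symm, hu₂.symm]
    exact this (by linear_combination hQA)
  · simp only [Set.mem_insert_iff, Set.mem_singleton_iff]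
    rintro P (rfl | rfl | rfl | rfl | rfl | rfl) <;>
      simp only [hQ, x, y, z, b.coord_lineMap, coe_sub, coe_smul, Pi.sub_apply, Pi.add_apply,
        Pi.smul_apply, Pi.mul_apply, smul_eq_mul, Fin.reduceEq, ↓reduceIte]
    · ring
    · ring
    · linear_combination (1 - u₁) ^ 2 * hcarnot
    · linear_combination (1 - u₂) ^ 2 * hcarnot
    · ring
    · ring

theorem conconic_of_isogonal (A B C A₁ A₂ B₁ B₂ C₁ C₂ : Pt)
    (hABC : AffineIndependent ℝ ![A, B, C])
    (hA₁ : Sbtw ℝ B A₁ C) (hA₂ : Sbtw ℝ B A₂ C) (hA : ∠ B A A₁ = ∠ C A A₂)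
    (hB₁ : Sbtw ℝ C B₁ A) (hB₂ : Sbtw ℝ C B₂ A) (hB : ∠ C B B₁ = ∠ A B B₂)
    (hC₁ : Sbtw ℝ A C₁ B) (hC₂ : Sbtw ℝ A C₂ B) (hC : ∠ A C C₁ = ∠ B C C₂) :
    Conconic {A₁, A₂, B₁, B₂, C₁, C₂} := by
  obtain ⟨t₁, ⟨ht₁, -⟩, rfl⟩ := hA₁.mem_image_Ioo
  obtain ⟨t₂, ⟨ht₂, ht₂'⟩, rfl⟩ := hA₂.mem_image_Ioo
  obtain ⟨u₁, ⟨hu₁, hu₁'⟩, rfl⟩ := hB₁.mem_image_Ioo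
  obtain ⟨u₂, ⟨-, hu₂'⟩, rfl⟩ := hB₂.mem_image_Ioo
  obtain ⟨v₁, ⟨hv₁, -⟩, rfl⟩ := hC₁.mem_image_Ioo
  obtain ⟨v₂, ⟨hv₂, hv₂'⟩, rfl⟩ := hC₂.mem_image_Ioo
  have hcol : ¬Collinear ℝ {A, B, C} := affineIndependent_iff_not_collinear_set.1 hABC
  have hRa := dist_sq_mul_eq_dist_sq_mul_of_isogonal
    (by rwa [Set.insert_comm B A]) ht₁.le ht₂'.le hA
  have hRb := dist_sq_mul_eq_dist_sq_mul_of_isogonal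
    (by rwa [Set.pair_comm B A, Set.insert_comm C A, Set.pair_comm C B]) hu₁.le hu₂'.le hB
  have hRc := dist_sq_mul_eq_dist_sq_mul_of_isogonal
    (by rwa [Set.pair_comm C B]) hv₁.le hv₂'.le hC
  rw [dist_comm A C] at hRa
  rw [dist_comm B A] at hRb
  rw [dist_comm C B] at hRc
  have hsides : dist A B ^ 2 * dist B C ^ 2 * dist C A ^ 2 ≠ 0 := by
    have hAB := dist_ne_zero.2 (ne₁₂_of_not_collinear hcol)
    have hBC := dist_ne_zero.2 (ne₂₃_of_not_collinear hcol)
    have hCA := dist_ne_zero.2 (ne₁₃_of_not_collinear hcol).symm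
    positivity
  have hcarnot : (1 - t₁) * (1 - t₂) * ((1 - u₁) * (1 - u₂)) * ((1 - v₁) * (1 - v₂)) =
      t₁ * t₂ * (u₁ * u₂) * (v₁ * v₂) := by
    apply mul_left_cancel₀ hsides
    linear_combination
      (dist B C ^ 2 * ((1 - u₁) * (1 - u₂)) * (dist C A ^ 2 * ((1 - v₁) * (1 - v₂)))) * hRa +
      (dist C A ^ 2 * (t₁ * t₂) * (dist C A ^ 2 * ((1 - v₁) * (1 - v₂)))) * hRb +
      (dist C A ^ 2 * (t₁ * t₂) * (dist A B ^ 2 * (u₁ * u₂))) * hRc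
  exact conconic_of_carnot hABC ht₁.ne' ht₂.ne' hu₁'.ne hu₂'.ne hv₁.ne' hv₂.ne' hcarnot

/-- Morley conconic corollary: the six points where the angle trisectors of a triangle
meet the opposite sides are conconic. -/
theorem morley_trisector_feet_conconic
    (A B C A₁ A₂ B₁ B₂ C₁ C₂ : Pt)
    (hABC : AffineIndependent ℝ ![A, B, C])
    (hA₁ : Sbtw ℝ B A₁ C) (haA₁ : ∠ B A A₁ = ∠ B A C / 3)
    (hA₂ : Sbtw ℝ B A₂ C) (haA₂ : ∠ C A A₂ = ∠ B A C / 3)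
    (hB₁ : Sbtw ℝ C B₁ A) (haB₁ : ∠ C B B₁ = ∠ A B C / 3)
    (hB₂ : Sbtw ℝ C B₂ A) (haB₂ : ∠ A B B₂ = ∠ A B C / 3)
    (hC₁ : Sbtw ℝ A C₁ B) (haC₁ : ∠ A C C₁ = ∠ B C A / 3)
    (hC₂ : Sbtw ℝ A C₂ B) (haC₂ : ∠ B C C₂ = ∠ B C A / 3) :
    Conconic {A₁, A₂, B₁, B₂, C₁, C₂} :=
  conconic_of_isogonal A B C A₁ A₂ B₁ B₂ C₁ C₂ hABC hA₁ hA₂ (haA₁.trans haA₂.symm)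
    hB₁ hB₂ (haB₁.trans haB₂.symm) hC₁ hC₂ (haC₁.trans haC₂.symm)
end
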